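/- Let u be a smooth divergence-free vector field on ℝ³ and P a smooth function, both sufficiently decaying, satisfying −Δu + (u·∇)u + ∇P = 0 on ℝ³. Let φ be a smooth compactly supported scalar function. Then the following energy identity holds: ∫ φ |∇⊗u|² dx = ∫ Δφ · (|u|²/2) dx + ∫ ∇φ · (P + |u|²/2) u dx. -/

import Mathlib

open MeasureTheory

/-- The Laplacian of a scalar function on `ℝ³`. -/
noncomputable def lap3 (f : EuclideanSpace ℝ (Fin 3) → ℝ)
    (x : EuclideanSpace ℝ (Fin 3)) : ℝ :=
  ∑ i : Fin 3,
    fderiv ℝ (fun y => fderiv ℝ f y (EuclideanSpace.single i 1)) x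
      (EuclideanSpace.single i 1)

section NSaux

local notation "E3" => EuclideanSpace ℝ (Fin 3)
local notation "e" i => EuclideanSpace.single i (1:ℝ)

/-- Integral of a directional derivative of a smooth compactly supported function vanishes. -/
lemma key_div {F : E3 → ℝ} (hF : ContDiff ℝ (⊤ : ℕ∞) F) (hs : HasCompactSupport F) (v : E3) :
    ∫ x, fderiv ℝ F x v = 0 := by
  obtain ⟨C, hC⟩ := hF.lipschitzWith_of_hasCompactSupport hs (by simp)
  have h := LipschitzWith.integral_lineDeriv_mul_eq (f := fun _ => (1:ℝ))
    (LipschitzWith.const 1) hC hs (μ := volume) (-v)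
  have h1 : ∀ x : E3, lineDeriv ℝ (fun _ => (1:ℝ)) x (-v) = 0 := fun x => by
    rw [(differentiableAt_const (1:ℝ)).lineDeriv_eq_fderiv]; simp
  simp only [h1, zero_mul, integral_zero, neg_neg, mul_one] at h
  rw [show (fun x : E3 => fderiv ℝ F x v) = fun x => lineDeriv ℝ F x v from
    funext fun x => ((hF.differentiable (by simp) x).lineDeriv_eq_fderiv).symm, ← h]

section helpers
variable {f g : E3 → ℝ} {x v : E3}

lemma fd_mul (hf : DifferentiableAt ℝ f x) (hg : DifferentiableAt ℝ g x) :
    fderiv ℝ (fun y => f y * g y) x v = fderiv ℝ f x v * g x + f x * fderiv ℝ g x v := by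
  rw [fderiv_fun_mul hf hg]; simp [smul_eq_mul]; ring

lemma fd_add (hf : DifferentiableAt ℝ f x) (hg : DifferentiableAt ℝ g x) :
    fderiv ℝ (fun y => f y + g y) x v = fderiv ℝ f x v + fderiv ℝ g x v := by
  rw [fderiv_fun_add hf hg]; simp

lemma fd_sub (hf : DifferentiableAt ℝ f x) (hg : DifferentiableAt ℝ g x) :
    fderiv ℝ (fun y => f y - g y) x v = fderiv ℝ f x v - fderiv ℝ g x v := by
  rw [fderiv_fun_sub hf hg]; simp

lemma fd_div2 (hf : DifferentiableAt ℝ f x) :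
    fderiv ℝ (fun y => f y / 2) x v = fderiv ℝ f x v / 2 := by
  simp only [div_eq_mul_inv]
  rw [fderiv_mul_const hf]; simp; ring

lemma fd_sum {A : Fin 3 → E3 → ℝ} (h : ∀ j, DifferentiableAt ℝ (A j) x) :
    fderiv ℝ (fun y => ∑ j, A j y) x v = ∑ j, fderiv ℝ (A j) x v := by
  rw [fderiv_fun_sum (fun j _ => h j)]; simp

lemma fd_coord {w : E3 → E3} (hw : DifferentiableAt ℝ w x) (j : Fin 3) :
    fderiv ℝ (fun y => w y j) x v = (fderiv ℝ w x v) j := by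
  have h1 : (fun y => w y j) = (⇑(EuclideanSpace.proj (𝕜 := ℝ) j) ∘ w) := by
    funext z; simp
  rw [h1, ((EuclideanSpace.proj (𝕜 := ℝ) j).hasFDerivAt.comp x hw.hasFDerivAt).fderiv]
  simp

lemma euclid_decomp (L : E3 →L[ℝ] E3) (w : E3) (j : Fin 3) :
    (L w) j = ∑ i, w i * (L (EuclideanSpace.single i 1)) j := by
  have hw : w = ∑ i, w i • EuclideanSpace.single i (1:ℝ) := by
    ext k
    rw [Fin.sum_univ_three]
    simp only [PiLp.add_apply, PiLp.smul_apply, EuclideanSpace.single_apply, smul_eq_mul]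
    fin_cases k <;> simp
  conv_lhs => rw [hw]
  rw [map_sum, Fin.sum_univ_three, Fin.sum_univ_three]
  simp [smul_eq_mul]

lemma norm_sq_coords (w : E3) : ‖w‖^2 = ∑ j, w j * w j := by
  rw [EuclideanSpace.norm_eq, Real.sq_sqrt (by positivity)]
  simp [sq, Real.norm_eq_abs, abs_mul_abs_self]
end helpers

/-- The test vector field used in the divergence argument. -/
noncomputable def Gfun (u : E3 → E3) (P φ : E3 → ℝ) (i : Fin 3) (y : E3) : ℝ :=
  φ y * (∑ j, (fderiv ℝ u y (e i)) j * u y j)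
  - fderiv ℝ φ y (e i) * ((∑ j, u y j * u y j) / 2)
  - φ y * ((P y + (∑ j, u y j * u y j) / 2) * u y i)

variable {u : E3 → E3} {P φ : E3 → ℝ}

lemma contDiff_Du (hu : ContDiff ℝ (⊤ : ℕ∞) u) (i j : Fin 3) :
    ContDiff ℝ (⊤ : ℕ∞) (fun y => (fderiv ℝ u y (e i)) j) :=
  (EuclideanSpace.proj (𝕜 := ℝ) j).contDiff.comp
    (((hu.fderiv_right (by simp)).clm_apply contDiff_const))

lemma contDiff_uj (hu : ContDiff ℝ (⊤ : ℕ∞) u) (j : Fin 3) :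
    ContDiff ℝ (⊤ : ℕ∞) (fun y => u y j) :=
  (EuclideanSpace.proj (𝕜 := ℝ) j).contDiff.comp hu

lemma contDiff_q (hu : ContDiff ℝ (⊤ : ℕ∞) u) :
    ContDiff ℝ (⊤ : ℕ∞) (fun y => (∑ j, u y j * u y j) / 2) :=
  (ContDiff.sum fun j _ => (contDiff_uj hu j).mul (contDiff_uj hu j)).div_const 2

lemma contDiff_dφ (hφ : ContDiff ℝ (⊤ : ℕ∞) φ) (i : Fin 3) :
    ContDiff ℝ (⊤ : ℕ∞) (fun y => fderiv ℝ φ y (e i)) :=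
  (hφ.fderiv_right (by simp)).clm_apply contDiff_const

lemma contDiff_G (hu : ContDiff ℝ (⊤ : ℕ∞) u) (hP : ContDiff ℝ (⊤ : ℕ∞) P) (hφ : ContDiff ℝ (⊤ : ℕ∞) φ)
    (i : Fin 3) : ContDiff ℝ (⊤ : ℕ∞) (Gfun u P φ i) := by
  unfold Gfun
  exact ((hφ.mul (ContDiff.sum fun j _ => (contDiff_Du hu i j).mul (contDiff_uj hu j))).sub
    ((contDiff_dφ hφ i).mul (contDiff_q hu))).sub
    (hφ.mul ((hP.add (contDiff_q hu)).mul (contDiff_uj hu i)))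

lemma supp_G (hφsupp : HasCompactSupport φ) (i : Fin 3) :
    HasCompactSupport (Gfun u P φ i) := by
  apply HasCompactSupport.intro hφsupp
  intro x hx
  have h1 : φ x = 0 := image_eq_zero_of_notMem_tsupport hx
  have h2 : fderiv ℝ φ x = 0 := by
    by_contra h
    exact hx (support_fderiv_subset ℝ h)
  simp [Gfun, h1, h2]

lemma supp_second (i : Fin 3) {x : E3} (hx : x ∉ tsupport φ) :
    fderiv ℝ (fun y => fderiv ℝ φ y (e i)) x = 0 := by
  by_contra h
  have h1 : x ∈ tsupport (fun y => fderiv ℝ φ y (e i)) :=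
    support_fderiv_subset ℝ h
  have h2 : tsupport (fun y => fderiv ℝ φ y (e i)) ⊆ tsupport φ := by
    apply closure_minimal _ (isClosed_tsupport φ)
    intro y hy
    have h3 : fderiv ℝ φ y ≠ 0 := by
      intro hz
      apply hy
      simp only [Function.mem_support, ne_eq, not_not] at hy ⊢
      rw [hz]; simp
    exact support_fderiv_subset ℝ h3
  exact hx (h2 h1)

/-- Pointwise divergence identity. -/
lemma pointwise_div
    (hu : ContDiff ℝ (⊤ : ℕ∞) u) (hP : ContDiff ℝ (⊤ : ℕ∞) P) (hφ : ContDiff ℝ (⊤ : ℕ∞) φ)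
    (hdiv : ∀ x, ∑ i : Fin 3, (fderiv ℝ u x (EuclideanSpace.single i 1)) i = 0)
    (hNS : ∀ x, ∀ i : Fin 3,
      -(lap3 (fun y => u y i) x) + (fderiv ℝ u x (u x)) i
        + fderiv ℝ P x (EuclideanSpace.single i 1) = 0) (x : E3) :
    ∑ i, fderiv ℝ (Gfun u P φ i) x (e i)
      = φ x * (∑ i, ∑ j, (fderiv ℝ u x (e i)) j * (fderiv ℝ u x (e i)) j)
        - lap3 φ x * ((∑ j, u x j * u x j) / 2)
        - ∑ i, fderiv ℝ φ x (e i) * ((P x + (∑ j, u x j * u x j) / 2) * u x i) := by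
  have hud : Differentiable ℝ u := hu.differentiable (by simp)
  have hPd : Differentiable ℝ P := hP.differentiable (by simp)
  have hφd : Differentiable ℝ φ := hφ.differentiable (by simp)
  have hujd : ∀ j, Differentiable ℝ (fun y => u y j) :=
    fun j => (contDiff_uj hu j).differentiable (by simp)
  have hDud : ∀ i j, Differentiable ℝ (fun y => (fderiv ℝ u y (e i)) j) :=
    fun i j => (contDiff_Du hu i j).differentiable (by simp)
  have hs2 : Differentiable ℝ (fun y => ∑ j, u y j * u y j) :=
    Differentiable.fun_sum fun j _ => (hujd j).mul (hujd j)
  have hqd : Differentiable ℝ (fun y => (∑ j, u y j * u y j) / 2) :=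
    (contDiff_q hu).differentiable (by simp)
  have hdφd : ∀ i, Differentiable ℝ (fun y => fderiv ℝ φ y (e i)) :=
    fun i => (contDiff_dφ hφ i).differentiable (by simp)
  have hSd : ∀ i, Differentiable ℝ (fun y => ∑ j, (fderiv ℝ u y (e i)) j * u y j) :=
    fun i => Differentiable.fun_sum fun j _ => (hDud i j).mul (hujd j)
  have hq' : ∀ i : Fin 3, fderiv ℝ (fun y => (∑ j, u y j * u y j) / 2) x (e i)
      = (∑ j, ((fderiv ℝ u x (e i)) j * u x j + u x j * (fderiv ℝ u x (e i)) j)) / 2 := by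
    intro i
    rw [fd_div2 (hs2 x), fd_sum (fun j => ((hujd j) x).fun_mul ((hujd j) x))]
    congr 1
    refine Finset.sum_congr rfl fun j _ => ?_
    rw [fd_mul ((hujd j) x) ((hujd j) x), fd_coord (hud x) j]
  have hS' : ∀ i : Fin 3, fderiv ℝ (fun y => ∑ j, (fderiv ℝ u y (e i)) j * u y j) x (e i)
      = ∑ j, (fderiv ℝ (fun y => (fderiv ℝ u y (e i)) j) x (e i) * u x j
            + (fderiv ℝ u x (e i)) j * (fderiv ℝ u x (e i)) j) := by
    intro i
    rw [fd_sum (fun j => ((hDud i j) x).fun_mul ((hujd j) x))]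
    refine Finset.sum_congr rfl fun j _ => ?_
    rw [fd_mul ((hDud i j) x) ((hujd j) x), fd_coord (hud x) j]
  have hT3' : ∀ i : Fin 3, fderiv ℝ (fun y => (P y + (∑ j, u y j * u y j) / 2) * u y i) x (e i)
      = (fderiv ℝ P x (e i)
          + (∑ j, ((fderiv ℝ u x (e i)) j * u x j + u x j * (fderiv ℝ u x (e i)) j)) / 2) * u x i
        + (P x + (∑ j, u x j * u x j) / 2) * (fderiv ℝ u x (e i)) i := by
    intro i
    rw [fd_mul ((hPd.fun_add hqd) x) ((hujd i) x), fd_add (hPd x) (hqd x), hq' i,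
      fd_coord (hud x) i]
  have hGi : ∀ i : Fin 3, fderiv ℝ (Gfun u P φ i) x (e i)
      = (fderiv ℝ φ x (e i) * (∑ j, (fderiv ℝ u x (e i)) j * u x j)
          + φ x * (∑ j, (fderiv ℝ (fun y => (fderiv ℝ u y (e i)) j) x (e i) * u x j
            + (fderiv ℝ u x (e i)) j * (fderiv ℝ u x (e i)) j)))
        - (fderiv ℝ (fun y => fderiv ℝ φ y (e i)) x (e i) * ((∑ j, u x j * u x j) / 2)
          + fderiv ℝ φ x (e i)
            * ((∑ j, ((fderiv ℝ u x (e i)) j * u x j + u x j * (fderiv ℝ u x (e i)) j)) / 2))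
        - (fderiv ℝ φ x (e i) * ((P x + (∑ j, u x j * u x j) / 2) * u x i)
          + φ x * ((fderiv ℝ P x (e i)
              + (∑ j, ((fderiv ℝ u x (e i)) j * u x j + u x j * (fderiv ℝ u x (e i)) j)) / 2)
                * u x i
            + (P x + (∑ j, u x j * u x j) / 2) * (fderiv ℝ u x (e i)) i)) := by
    intro i
    have d1 : DifferentiableAt ℝ
        (fun y => φ y * (∑ j, (fderiv ℝ u y (e i)) j * u y j)) x := (hφd x).mul ((hSd i) x)
    have d2 : DifferentiableAt ℝ
        (fun y => fderiv ℝ φ y (e i) * ((∑ j, u y j * u y j) / 2)) x :=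
      ((hdφd i) x).mul (hqd x)
    have d3 : DifferentiableAt ℝ
        (fun y => φ y * ((P y + (∑ j, u y j * u y j) / 2) * u y i)) x :=
      (hφd x).mul (((hPd.add hqd).mul (hujd i)) x)
    show fderiv ℝ (fun y =>
        φ y * (∑ j, (fderiv ℝ u y (e i)) j * u y j)
        - fderiv ℝ φ y (e i) * ((∑ j, u y j * u y j) / 2)
        - φ y * ((P y + (∑ j, u y j * u y j) / 2) * u y i)) x (e i) = _
    rw [fd_sub (d1.fun_sub d2) d3, fd_sub d1 d2, fd_mul (hφd x) ((hSd i) x),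
      fd_mul ((hdφd i) x) (hqd x), fd_mul (hφd x) (((hPd.fun_add hqd).fun_mul (hujd i)) x),
      hq' i, hS' i, hT3' i]
  have hW : ∀ j : Fin 3,
      ∑ i, fderiv ℝ (fun y => (fderiv ℝ u y (e i)) j) x (e i)
        = (∑ i, u x i * (fderiv ℝ u x (e i)) j) + fderiv ℝ P x (e j) := by
    intro j
    have h1 : ∀ i : Fin 3, (fun y => fderiv ℝ (fun z => u z j) y (e i))
        = (fun y => (fderiv ℝ u y (e i)) j) :=
      fun i => funext fun y => by rw [fd_coord (hud y) j]
    have h2 := hNS x j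
    unfold lap3 at h2
    simp only [h1] at h2
    rw [euclid_decomp (fderiv ℝ u x) (u x) j] at h2
    linarith
  have hdx := hdiv x
  rw [Fin.sum_univ_three] at hdx
  have hW0 := hW 0; have hW1 := hW 1; have hW2 := hW 2
  simp only [Fin.sum_univ_three] at hW0 hW1 hW2
  unfold lap3
  rw [Fin.sum_univ_three, hGi 0, hGi 1, hGi 2]
  simp only [Fin.sum_univ_three]
  linear_combination (φ x * u x 0) * hW0 + (φ x * u x 1) * hW1 + (φ x * u x 2) * hW2
    - (φ x * (P x + (u x 0 * u x 0 + u x 1 * u x 1 + u x 2 * u x 2) / 2)) * hdx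

end NSaux

/-- Energy identity for smooth decaying solutions of the
stationary Navier–Stokes equations: testing `-Δu + (u·∇)u + ∇P = 0`
(for divergence-free `u`) against `φ u` with `φ` smooth compactly supported gives
`∫ φ |∇⊗u|² = ∫ Δφ |u|²/2 + ∫ ∇φ · (P + |u|²/2) u`. -/
theorem stmt_16 (u : EuclideanSpace ℝ (Fin 3) → EuclideanSpace ℝ (Fin 3))
    (P : EuclideanSpace ℝ (Fin 3) → ℝ)
    (φ : EuclideanSpace ℝ (Fin 3) → ℝ)
    (hu : ContDiff ℝ (⊤ : ℕ∞) u) (hP : ContDiff ℝ (⊤ : ℕ∞) P)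
    (hdecay : Integrable u ∧ Integrable P ∧ Integrable (fun x => ‖u x‖ ^ 2))
    (hdiv : ∀ x, ∑ i : Fin 3,
      (fderiv ℝ u x (EuclideanSpace.single i 1)) i = 0)
    (hNS : ∀ x, ∀ i : Fin 3,
      -(lap3 (fun y => u y i) x) + (fderiv ℝ u x (u x)) i
        + fderiv ℝ P x (EuclideanSpace.single i 1) = 0)
    (hφ : ContDiff ℝ (⊤ : ℕ∞) φ) (hφsupp : HasCompactSupport φ) :
    ∫ x, φ x * ∑ i : Fin 3, ‖fderiv ℝ u x (EuclideanSpace.single i 1)‖ ^ 2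
      = (∫ x, lap3 φ x * (‖u x‖ ^ 2 / 2))
        + ∫ x, ∑ i : Fin 3, fderiv ℝ φ x (EuclideanSpace.single i 1)
            * ((P x + ‖u x‖ ^ 2 / 2) * u x i) := by
  -- divergence integral vanishes
  have hGc : ∀ i, ContDiff ℝ (⊤ : ℕ∞) (Gfun u P φ i) := contDiff_G hu hP hφ
  have hGs : ∀ i, HasCompactSupport (Gfun u P φ i) := supp_G hφsupp
  have hintG : ∀ i : Fin 3, Integrable
      (fun x => fderiv ℝ (Gfun u P φ i) x (EuclideanSpace.single i 1)) := by
    intro i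
    apply Continuous.integrable_of_hasCompactSupport
    · have h5 : ContDiff ℝ (⊤ : ℕ∞)
          (fun x => fderiv ℝ (Gfun u P φ i) x (EuclideanSpace.single i 1)) :=
        ((hGc i).fderiv_right (by simp)).clm_apply contDiff_const
      exact h5.continuous
    · apply HasCompactSupport.intro (hGs i)
      intro x hx
      have h2 : fderiv ℝ (Gfun u P φ i) x = 0 := by
        by_contra h
        exact hx (support_fderiv_subset ℝ h)
      rw [h2]; simp
  have hsum0 : ∫ x, ∑ i : Fin 3,
      fderiv ℝ (Gfun u P φ i) x (EuclideanSpace.single i 1) = 0 := by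
    rw [integral_finset_sum _ (fun i _ => hintG i)]
    have : ∀ i : Fin 3, ∫ x,
        fderiv ℝ (Gfun u P φ i) x (EuclideanSpace.single i 1) = 0 :=
      fun i => key_div (hGc i) (hGs i) _
    simp [this]
  -- integrability of the three integrands
  have hcu : Continuous u := hu.continuous
  have hnormsq : Continuous (fun x : EuclideanSpace ℝ (Fin 3) => ‖u x‖ ^ 2) :=
    (hcu.norm).pow 2
  have hI1 : Integrable (fun x => φ x * ∑ i : Fin 3,
      ‖fderiv ℝ u x (EuclideanSpace.single i 1)‖ ^ 2) := by
    apply Continuous.integrable_of_hasCompactSupport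
    · refine hφ.continuous.mul (continuous_finset_sum _ fun i _ => ?_)
      have h5 : ContDiff ℝ (⊤ : ℕ∞)
          (fun x => fderiv ℝ u x (EuclideanSpace.single i 1)) :=
        (hu.fderiv_right (by simp)).clm_apply contDiff_const
      exact (h5.continuous.norm).pow 2
    · apply HasCompactSupport.intro hφsupp
      intro x hx
      rw [image_eq_zero_of_notMem_tsupport hx, zero_mul]
  have hI2 : Integrable (fun x => lap3 φ x * (‖u x‖ ^ 2 / 2)) := by
    apply Continuous.integrable_of_hasCompactSupport
    · refine Continuous.mul ?_ (hnormsq.div_const 2)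
      unfold lap3
      refine continuous_finset_sum _ fun i _ => ?_
      have h5 : ContDiff ℝ (⊤ : ℕ∞) (fun x =>
          fderiv ℝ (fun y => fderiv ℝ φ y (EuclideanSpace.single i 1)) x
            (EuclideanSpace.single i 1)) :=
        ((contDiff_dφ hφ i).fderiv_right (by simp)).clm_apply contDiff_const
      exact h5.continuous
    · apply HasCompactSupport.intro hφsupp
      intro x hx
      have : lap3 φ x = 0 := by
        unfold lap3
        refine Finset.sum_eq_zero fun i _ => ?_
        rw [supp_second i hx]; simp
      rw [this, zero_mul]
  have hI3 : Integrable (fun x => ∑ i : Fin 3, fderiv ℝ φ x (EuclideanSpace.single i 1)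
      * ((P x + ‖u x‖ ^ 2 / 2) * u x i)) := by
    apply Continuous.integrable_of_hasCompactSupport
    · exact continuous_finset_sum _ fun i _ =>
        ((contDiff_dφ hφ i).continuous).mul
          ((hP.continuous.add (hnormsq.div_const 2)).mul
            ((EuclideanSpace.proj (𝕜 := ℝ) i).continuous.comp hcu))
    · apply HasCompactSupport.intro hφsupp
      intro x hx
      have h2 : fderiv ℝ φ x = 0 := by
        by_contra h
        exact hx (support_fderiv_subset ℝ h)
      refine Finset.sum_eq_zero fun i _ => ?_
      rw [h2]; simp
  -- pointwise identity
  have hptw : ∀ x : EuclideanSpace ℝ (Fin 3),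
      φ x * (∑ i : Fin 3, ‖fderiv ℝ u x (EuclideanSpace.single i 1)‖ ^ 2)
      - lap3 φ x * (‖u x‖ ^ 2 / 2)
      - (∑ i : Fin 3, fderiv ℝ φ x (EuclideanSpace.single i 1)
          * ((P x + ‖u x‖ ^ 2 / 2) * u x i))
      = ∑ i : Fin 3, fderiv ℝ (Gfun u P φ i) x (EuclideanSpace.single i 1) := by
    intro x
    have h6 := pointwise_div hu hP hφ hdiv hNS x
    simp only [norm_sq_coords]
    rw [h6]
  have hkey : ∫ x, (φ x * (∑ i : Fin 3, ‖fderiv ℝ u x (EuclideanSpace.single i 1)‖ ^ 2)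
      - lap3 φ x * (‖u x‖ ^ 2 / 2)
      - (∑ i : Fin 3, fderiv ℝ φ x (EuclideanSpace.single i 1)
          * ((P x + ‖u x‖ ^ 2 / 2) * u x i))) = 0 := by
    simp only [hptw]
    exact hsum0
  have h7 : ∫ x, (φ x * (∑ i : Fin 3, ‖fderiv ℝ u x (EuclideanSpace.single i 1)‖ ^ 2)
        - lap3 φ x * (‖u x‖ ^ 2 / 2)
        - (∑ i : Fin 3, fderiv ℝ φ x (EuclideanSpace.single i 1)
            * ((P x + ‖u x‖ ^ 2 / 2) * u x i)))
      = (∫ x, (φ x * (∑ i : Fin 3, ‖fderiv ℝ u x (EuclideanSpace.single i 1)‖ ^ 2)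
          - lap3 φ x * (‖u x‖ ^ 2 / 2)))
        - ∫ x, ∑ i : Fin 3, fderiv ℝ φ x (EuclideanSpace.single i 1)
            * ((P x + ‖u x‖ ^ 2 / 2) * u x i) :=
    integral_sub (hI1.sub hI2) hI3
  have h8 : ∫ x, (φ x * (∑ i : Fin 3, ‖fderiv ℝ u x (EuclideanSpace.single i 1)‖ ^ 2)
        - lap3 φ x * (‖u x‖ ^ 2 / 2))
      = (∫ x, φ x * (∑ i : Fin 3, ‖fderiv ℝ u x (EuclideanSpace.single i 1)‖ ^ 2))
        - ∫ x, lap3 φ x * (‖u x‖ ^ 2 / 2) :=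
    integral_sub hI1 hI2
  rw [h7, h8] at hkey
  linarith
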